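/- arXiv:1902.10081 — 9 statements merged into one kernel-verified Lean document; each statement's English description precedes it below -/
import Mathlib

section
/- A linear map D : A ×_θ U → X is a derivation if and only if there exist derivations δ₁ : A → X and δ₂ : U → X such that D((a,u)) = δ₁(a) + δ₂(u) for all a ∈ A, u ∈ U, and a·δ₂(u) + δ₁(a)·u = θ(a)δ₂(u) = δ₂(u)·a + u·δ₁(a) for all a ∈ A, u ∈ U. -/
open Filter Topology

/-- The Lau product multiplication on A × U:
(a,u)(a',u') = (aa', θ(a)u' + θ(a')u + uu'). -/
def lauMul {A U : Type*} [Mul A] [Mul U] [Add U] [SMul ℂ U]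
    (θ : A → ℂ) (p q : A × U) : A × U :=
  (p.1 * q.1, θ p.1 • q.2 + θ q.1 • p.2 + p.2 * q.2)

/-- `X` is a Banach `(A ×_θ U)`-bimodule with left action `l` and right action `r`:
both actions are bilinear, associative with respect to the Lau multiplication,
compatible with each other, and bounded. -/
def IsLauBimodule {A U X : Type*}
    [NonUnitalNormedRing A] [NormedSpace ℂ A]
    [NonUnitalNormedRing U] [NormedSpace ℂ U]
    [NormedAddCommGroup X] [NormedSpace ℂ X]
    (θ : A → ℂ) (l : A × U → X → X) (r : X → A × U → X) : Prop :=
  (∀ x, IsLinearMap ℂ fun p : A × U => l p x) ∧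
  (∀ p, IsLinearMap ℂ (l p)) ∧
  (∀ x, IsLinearMap ℂ fun p : A × U => r x p) ∧
  (∀ p, IsLinearMap ℂ fun x : X => r x p) ∧
  (∀ p q x, l (lauMul θ p q) x = l p (l q x)) ∧
  (∀ p q x, r x (lauMul θ p q) = r (r x p) q) ∧
  (∀ p q x, r (l p x) q = l p (r x q)) ∧
  (∃ C : ℝ, ∀ p x, ‖l p x‖ ≤ C * ‖p‖ * ‖x‖ ∧ ‖r x p‖ ≤ C * ‖p‖ * ‖x‖)

/-- A linear map D : A ×_θ U → X is a derivation if and only if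
D((a,u)) = δ₁(a) + δ₂(u) for derivations δ₁ : A → X, δ₂ : U → X satisfying
a·δ₂(u) + δ₁(a)·u = θ(a)δ₂(u) = δ₂(u)·a + u·δ₁(a). -/
theorem lau_derivation_structure {A U X : Type*}
    [NonUnitalNormedRing A] [NormedSpace ℂ A] [IsScalarTower ℂ A A]
    [SMulCommClass ℂ A A] [CompleteSpace A]
    [NonUnitalNormedRing U] [NormedSpace ℂ U] [IsScalarTower ℂ U U]
    [SMulCommClass ℂ U U] [CompleteSpace U]
    [NormedAddCommGroup X] [NormedSpace ℂ X] [CompleteSpace X]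
    (θ : A →L[ℂ] ℂ) (hθmul : ∀ a b : A, θ (a * b) = θ a * θ b) (hθ0 : θ ≠ 0)
    (l : A × U → X → X) (r : X → A × U → X)
    (hbm : IsLauBimodule (fun a => θ a) l r)
    (D : (A × U) →ₗ[ℂ] X) :
    (∀ p q : A × U, D (lauMul (fun a => θ a) p q) = l p (D q) + r (D p) q) ↔
    ∃ (δ₁ : A →ₗ[ℂ] X) (δ₂ : U →ₗ[ℂ] X),
      (∀ p : A × U, D p = δ₁ p.1 + δ₂ p.2) ∧
      (∀ a b : A, δ₁ (a * b) = l (a, 0) (δ₁ b) + r (δ₁ a) (b, 0)) ∧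
      (∀ u v : U, δ₂ (u * v) = l (0, u) (δ₂ v) + r (δ₂ u) (0, v)) ∧
      (∀ (a : A) (u : U),
        l (a, 0) (δ₂ u) + r (δ₁ a) (0, u) = θ a • δ₂ u ∧
        θ a • δ₂ u = r (δ₂ u) (a, 0) + l (0, u) (δ₁ a)) := by

  obtain ⟨hl1, hl2, hr1, hr2, -, -, -, -⟩ := hbm
  have lsplit : ∀ (a : A) (u : U) (x : X), l (a, u) x = l (a, 0) x + l (0, u) x := by
    intro a u x
    have := (hl1 x).map_add (a, 0) ((0 : A), u)
    simpa using this
  have rsplit : ∀ (b : A) (v : U) (x : X), r x (b, v) = r x (b, 0) + r x (0, v) := by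
    intro b v x
    have := (hr1 x).map_add (b, 0) ((0 : A), v)
    simpa using this
  constructor
  · intro hD
    refine ⟨D.comp (LinearMap.inl ℂ A U), D.comp (LinearMap.inr ℂ A U), ?_, ?_, ?_, ?_⟩
    · intro p
      simp only [LinearMap.comp_apply, LinearMap.inl_apply, LinearMap.inr_apply]
      rw [← map_add]
      congr 1 <;> simp
    · intro a b
      have := hD (a, 0) (b, 0)
      simpa [lauMul] using this
    · intro u v
      have := hD ((0 : A), u) ((0 : A), v)
      simpa [lauMul] using this
    · intro a u
      have key : (fun (a : A) => θ a) = fun a => θ a := rfl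
      have h1 := hD (a, 0) ((0 : A), u)
      have h2 := hD ((0 : A), u) (a, 0)
      have e : lauMul (fun a => θ a) (a, 0) ((0 : A), u) = θ a • ((0 : A), u) := by
        simp [lauMul, Prod.smul_mk]
      have e' : lauMul (fun a => θ a) ((0 : A), u) (a, 0) = θ a • ((0 : A), u) := by
        simp [lauMul, Prod.smul_mk]
      rw [e, map_smul] at h1
      rw [e', map_smul] at h2
      constructor
      · simpa using h1.symm
      · simpa [add_comm] using h2
  · rintro ⟨d1, d2, hDp, hA, hU, hmix⟩ p q
    obtain ⟨a, u⟩ := p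
    obtain ⟨b, v⟩ := q
    have elau : lauMul (fun a => θ a) (a, u) (b, v)
        = (a * b, θ a • v + θ b • u + u * v) := rfl
    rw [elau, hDp, hDp (a, u), hDp (b, v)]
    simp only [map_add, map_smul]
    rw [hA a b, hU u v, lsplit a u, rsplit b v, (hl2 (a,0)).map_add, (hl2 ((0:A),u)).map_add,
      (hr2 (b,0)).map_add, (hr2 ((0:A),v)).map_add]
    have m1 := (hmix a v).1
    have m2 := (hmix b u).2
    rw [← m1, m2]
    abel
end

section
/- Let D : A ×_θ U → X be a derivation with components δ₁(a) = D((a,0)) and δ₂(u) = D((0,u)). Then the separating space S(δ₁) = {x ∈ X : ∃ aₙ → 0 in A with δ₁(aₙ) → x} satisfies S(δ₁) ⊆ ann_X(U), i.e. u·x = x·u = 0 for all u ∈ U and x ∈ S(δ₁). -/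
open Filter Topology

/-- For a derivation D : A ×_θ U → X with component δ₁(a) = D((a,0)),
the separating space S(δ₁) is contained in ann_X(U): if aₙ → 0 in A and
δ₁(aₙ) → x, then u·x = x·u = 0 for every u ∈ U. -/
theorem separating_space_delta1_annihilates {A U X : Type*}
    [NonUnitalNormedRing A] [NormedSpace ℂ A] [IsScalarTower ℂ A A]
    [SMulCommClass ℂ A A] [CompleteSpace A]
    [NonUnitalNormedRing U] [NormedSpace ℂ U] [IsScalarTower ℂ U U]
    [SMulCommClass ℂ U U] [CompleteSpace U]
    [NormedAddCommGroup X] [NormedSpace ℂ X] [CompleteSpace X]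
    (θ : A →L[ℂ] ℂ) (hθmul : ∀ a b : A, θ (a * b) = θ a * θ b) (hθ0 : θ ≠ 0)
    (l : A × U → X → X) (r : X → A × U → X)
    (hbm : IsLauBimodule (fun a => θ a) l r)
    (D : (A × U) →ₗ[ℂ] X)
    (hD : ∀ p q : A × U, D (lauMul (fun a => θ a) p q) = l p (D q) + r (D p) q) :
    ∀ x : X,
      (∃ a : ℕ → A, Tendsto a atTop (nhds 0) ∧
        Tendsto (fun n => D (a n, 0)) atTop (nhds x)) →
      ∀ u : U, l (0, u) x = 0 ∧ r x (0, u) = 0 := by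
  obtain ⟨hl1, hl2, hr1, hr2, -, -, -, C, hC⟩ := hbm
  rintro x ⟨a, ha, hda⟩ u
  -- the sequence (aₙ, 0) tends to 0 in A × U
  have haU : Tendsto (fun n => ((a n, (0 : U)) : A × U)) atTop (𝓝 0) := by
    have : Tendsto (fun n => ((a n, (0 : U)) : A × U)) atTop (𝓝 ((0 : A), (0 : U))) :=
      ha.prodMk_nhds tendsto_const_nhds
    simpa only [Prod.mk_zero_zero] using this
  have hnorm : Tendsto (fun n => ‖((a n, (0 : U)) : A × U)‖) atTop (𝓝 0) := by
    simpa [Function.comp_def] using (continuous_norm.tendsto (0 : A × U)).comp haU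
  -- θ(aₙ) → 0
  have hθa : Tendsto (fun n => θ (a n)) atTop (𝓝 0) := by
    simpa [Function.comp_def] using (θ.continuous.tendsto 0).comp ha
  -- products in the Lau algebra
  have key : ∀ b : A, lauMul (fun a => θ a) ((b, (0 : U)) : A × U) ((0 : A), u)
      = θ b • (((0 : A), u) : A × U) := by
    intro b
    simp [lauMul, Prod.smul_def, mul_comm]
  have key' : ∀ b : A, lauMul (fun a => θ a) (((0 : A), u) : A × U) ((b, (0 : U)))
      = θ b • (((0 : A), u) : A × U) := by
    intro b
    simp [lauMul, Prod.smul_def, mul_comm]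
  -- derivation identities
  have hid1 : ∀ n, θ (a n) • D ((0 : A), u)
      = l (a n, (0 : U)) (D ((0 : A), u)) + r (D (a n, (0 : U))) ((0 : A), u) := by
    intro n
    have := hD ((a n, (0 : U))) (((0 : A), u))
    rw [key, map_smul] at this
    exact this
  have hid2 : ∀ n, θ (a n) • D ((0 : A), u)
      = l ((0 : A), u) (D (a n, (0 : U))) + r (D ((0 : A), u)) (a n, (0 : U)) := by
    intro n
    have := hD (((0 : A), u)) ((a n, (0 : U)))
    rw [key', map_smul] at this
    exact this
  -- limits
  have t0 : Tendsto (fun n => θ (a n) • D ((0 : A), u)) atTop (𝓝 0) := by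
    simpa using hθa.smul_const (D ((0 : A), u))
  have t1 : Tendsto (fun n => l (a n, (0 : U)) (D ((0 : A), u))) atTop (𝓝 0) := by
    rw [tendsto_zero_iff_norm_tendsto_zero]
    refine squeeze_zero (fun n => norm_nonneg _) (fun n => (hC _ _).1) ?_
    have := (hnorm.const_mul C).mul_const ‖D ((0 : A), u)‖
    simpa using this
  have t1' : Tendsto (fun n => r (D ((0 : A), u)) (a n, (0 : U))) atTop (𝓝 0) := by
    rw [tendsto_zero_iff_norm_tendsto_zero]
    refine squeeze_zero (fun n => norm_nonneg _) (fun n => (hC _ _).2) ?_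
    have := (hnorm.const_mul C).mul_const ‖D ((0 : A), u)‖
    simpa using this
  -- continuity of the module actions in x
  let fr : X →L[ℂ] X :=
    LinearMap.mkContinuous (IsLinearMap.mk' _ (hr2 (((0 : A), u))))
      (C * ‖(((0 : A), u) : A × U)‖)
      (fun y => by simpa [mul_assoc] using (hC (((0 : A), u)) y).2)
  let fl : X →L[ℂ] X :=
    LinearMap.mkContinuous (IsLinearMap.mk' _ (hl2 (((0 : A), u))))
      (C * ‖(((0 : A), u) : A × U)‖)
      (fun y => by simpa [mul_assoc] using (hC (((0 : A), u)) y).1)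
  have t2 : Tendsto (fun n => r (D (a n, (0 : U))) ((0 : A), u)) atTop
      (𝓝 (r x ((0 : A), u))) := by
    have : Tendsto (fun n => fr (D (a n, (0 : U)))) atTop (𝓝 (fr x)) :=
      (fr.continuous.tendsto x).comp hda
    simpa [fr, LinearMap.mkContinuous_apply] using this
  have t3 : Tendsto (fun n => l ((0 : A), u) (D (a n, (0 : U)))) atTop
      (𝓝 (l ((0 : A), u) x)) := by
    have : Tendsto (fun n => fl (D (a n, (0 : U)))) atTop (𝓝 (fl x)) :=
      (fl.continuous.tendsto x).comp hda
    simpa [fl, LinearMap.mkContinuous_apply] using this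
  constructor
  · have t4 : Tendsto (fun n => l ((0 : A), u) (D (a n, (0 : U)))) atTop (𝓝 0) := by
      have : (fun n => l ((0 : A), u) (D (a n, (0 : U))))
          = fun n => θ (a n) • D ((0 : A), u) - r (D ((0 : A), u)) (a n, (0 : U)) := by
        funext n
        have := hid2 n
        rw [this]; abel
      rw [this]
      simpa using t0.sub t1'
    exact tendsto_nhds_unique t3 t4
  · have t5 : Tendsto (fun n => r (D (a n, (0 : U))) ((0 : A), u)) atTop (𝓝 0) := by
      have : (fun n => r (D (a n, (0 : U))) ((0 : A), u))
          = fun n => θ (a n) • D ((0 : A), u) - l (a n, (0 : U)) (D ((0 : A), u)) := by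
        funext n
        have := hid1 n
        rw [this]; abel
      rw [this]
      simpa using t0.sub t1
    exact tendsto_nhds_unique t2 t5
end

section
/- Let D : A ×_θ U → X be a derivation with components δ₁, δ₂. Then the separating space S(δ₂) is contained in Z_X(A) = {x ∈ X : a·x = x·a for all a ∈ A}; in particular S(δ₂) is a symmetric A-subbimodule of X. -/
open Filter Topology

/-- For a derivation D : A ×_θ U → X with component δ₂(u) = D((0,u)),
the separating space S(δ₂) is contained in Z_X(A) = {x : a·x = x·a for all a ∈ A};
in particular S(δ₂) is a symmetric A-subbimodule of X. -/
theorem separating_space_delta2_central {A U X : Type*}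
    [NonUnitalNormedRing A] [NormedSpace ℂ A] [IsScalarTower ℂ A A]
    [SMulCommClass ℂ A A] [CompleteSpace A]
    [NonUnitalNormedRing U] [NormedSpace ℂ U] [IsScalarTower ℂ U U]
    [SMulCommClass ℂ U U] [CompleteSpace U]
    [NormedAddCommGroup X] [NormedSpace ℂ X] [CompleteSpace X]
    (θ : A →L[ℂ] ℂ) (hθmul : ∀ a b : A, θ (a * b) = θ a * θ b) (hθ0 : θ ≠ 0)
    (l : A × U → X → X) (r : X → A × U → X)
    (hbm : IsLauBimodule (fun a => θ a) l r)
    (D : (A × U) →ₗ[ℂ] X)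
    (hD : ∀ p q : A × U, D (lauMul (fun a => θ a) p q) = l p (D q) + r (D p) q) :
    ∀ x ∈ {x : X | ∃ u : ℕ → U, Tendsto u atTop (nhds 0) ∧
        Tendsto (fun n => D (0, u n)) atTop (nhds x)},
      (∀ a : A, l (a, 0) x = r x (a, 0)) ∧
      (∀ a : A, l (a, 0) x ∈ {x : X | ∃ u : ℕ → U, Tendsto u atTop (nhds 0) ∧
        Tendsto (fun n => D (0, u n)) atTop (nhds x)}) := by
  rintro x ⟨u, hu0, hux⟩
  obtain ⟨hl1, hl2, hr1, hr2, hlm, hrm, hc, C, hC⟩ := hbm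
  have hlcont : ∀ p : A × U, Continuous (l p) := fun p =>
    AddMonoidHomClass.continuous_of_bound (IsLinearMap.mk' _ (hl2 p)) (C * ‖p‖)
      (fun y => by simpa [mul_assoc] using (hC p y).1)
  have hrcont : ∀ p : A × U, Continuous (fun y => r y p) := fun p =>
    AddMonoidHomClass.continuous_of_bound (IsLinearMap.mk' _ (hr2 p)) (C * ‖p‖)
      (fun y => by simpa [mul_assoc] using (hC p y).2)
  have h1 : ∀ (a : A) (v : U),
      D (0, θ a • v) = l (a, 0) (D (0, v)) + r (D (a, 0)) (0, v) := by
    intro a v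
    have := hD (a, 0) (0, v)
    simpa [lauMul] using this
  have h2 : ∀ (a : A) (v : U),
      D (0, θ a • v) = l (0, v) (D (a, 0)) + r (D (0, v)) (a, 0) := by
    intro a v
    have := hD (0, v) (a, 0)
    simpa [lauMul] using this
  have hn : Tendsto (fun n => ‖u n‖) atTop (nhds 0) := by simpa using hu0.norm
  have hnorm : ∀ n, ‖((0 : A), u n)‖ = ‖u n‖ := by
    intro n
    simp [Prod.norm_def, max_eq_right (norm_nonneg _)]
  have main : ∀ a : A,
      Tendsto (fun n => D ((0 : A), θ a • u n)) atTop (nhds (l (a, 0) x)) ∧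
        l (a, 0) x = r x (a, 0) := by
    intro a
    have t1 : Tendsto (fun n => l (a, 0) (D (0, u n))) atTop (nhds (l (a, 0) x)) :=
      ((hlcont (a, 0)).tendsto x).comp hux
    have tb : Tendsto (fun n => C * ‖u n‖ * ‖D (a, 0)‖) atTop (nhds 0) := by
      simpa using (hn.const_mul C).mul_const ‖D ((a : A), (0 : U))‖
    have t2 : Tendsto (fun n => r (D (a, 0)) (0, u n)) atTop (nhds 0) := by
      refine squeeze_zero_norm (fun n => ?_) tb
      calc ‖r (D (a, 0)) ((0 : A), u n)‖ ≤ C * ‖((0 : A), u n)‖ * ‖D (a, 0)‖ := (hC _ _).2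
        _ = C * ‖u n‖ * ‖D (a, 0)‖ := by rw [hnorm]
    have t3 : Tendsto (fun n => l (0, u n) (D (a, 0))) atTop (nhds 0) := by
      refine squeeze_zero_norm (fun n => ?_) tb
      calc ‖l ((0 : A), u n) (D (a, 0))‖ ≤ C * ‖((0 : A), u n)‖ * ‖D (a, 0)‖ := (hC _ _).1
        _ = C * ‖u n‖ * ‖D (a, 0)‖ := by rw [hnorm]
    have t4 : Tendsto (fun n => r (D (0, u n)) (a, 0)) atTop (nhds (r x (a, 0))) :=
      ((hrcont (a, 0)).tendsto x).comp hux
    have T1 : Tendsto (fun n => D ((0 : A), θ a • u n)) atTop (nhds (l (a, 0) x)) := by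
      have h := t1.add t2
      rw [add_zero] at h
      exact h.congr fun n => (h1 a (u n)).symm
    have T2 : Tendsto (fun n => D ((0 : A), θ a • u n)) atTop (nhds (r x (a, 0))) := by
      have h := t3.add t4
      rw [zero_add] at h
      exact h.congr fun n => (h2 a (u n)).symm
    exact ⟨T1, tendsto_nhds_unique T1 T2⟩
  exact ⟨fun a => (main a).2, fun a =>
    ⟨fun n => θ a • u n, by simpa using hu0.const_smul (θ a), (main a).1⟩⟩
end

section
/- Let D : A ×_θ U → X be a derivation with components δ₁, δ₂. If ann_X(U) = {0}, then δ₁ is continuous. If Z_X(A) = {0}, then δ₂ is continuous. Consequently, if both ann_X(U) = {0} and Z_X(A) = {0}, then D is continuous. -/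
open Filter Topology

/-- For a derivation D : A ×_θ U → X with components
δ₁(a) = D((a,0)), δ₂(u) = D((0,u)): if ann_X(U) = {0} then δ₁ is continuous;
if Z_X(A) = {0} then δ₂ is continuous; and if both hold then D is continuous. -/
theorem lau_derivation_automatic_continuity {A U X : Type*}
    [NonUnitalNormedRing A] [NormedSpace ℂ A] [IsScalarTower ℂ A A]
    [SMulCommClass ℂ A A] [CompleteSpace A]
    [NonUnitalNormedRing U] [NormedSpace ℂ U] [IsScalarTower ℂ U U]
    [SMulCommClass ℂ U U] [CompleteSpace U]
    [NormedAddCommGroup X] [NormedSpace ℂ X] [CompleteSpace X]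
    (θ : A →L[ℂ] ℂ) (hθmul : ∀ a b : A, θ (a * b) = θ a * θ b) (hθ0 : θ ≠ 0)
    (l : A × U → X → X) (r : X → A × U → X)
    (hbm : IsLauBimodule (fun a => θ a) l r)
    (D : (A × U) →ₗ[ℂ] X)
    (hD : ∀ p q : A × U, D (lauMul (fun a => θ a) p q) = l p (D q) + r (D p) q) :
    ((∀ x : X, (∀ u : U, l (0, u) x = 0 ∧ r x (0, u) = 0) → x = 0) →
      Continuous (fun a : A => D (a, 0))) ∧
    ((∀ x : X, (∀ a : A, l (a, 0) x = r x (a, 0)) → x = 0) →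
      Continuous (fun u : U => D (0, u))) ∧
    ((∀ x : X, (∀ u : U, l (0, u) x = 0 ∧ r x (0, u) = 0) → x = 0) →
     (∀ x : X, (∀ a : A, l (a, 0) x = r x (a, 0)) → x = 0) →
      Continuous D) := by
  obtain ⟨hl1, hl2, hr1, hr2, -, -, -, C, hC⟩ := hbm
  -- The component maps as linear maps
  set δ₁ : A →ₗ[ℂ] X := D.comp (LinearMap.inl ℂ A U) with hδ₁def
  set δ₂ : U →ₗ[ℂ] X := D.comp (LinearMap.inr ℂ A U) with hδ₂def
  have hδ₁e : ∀ b : A, δ₁ b = D (b, 0) := fun b => rfl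
  have hδ₂e : ∀ u : U, δ₂ u = D (0, u) := fun u => rfl
  -- Continuous linear maps from the bounded bilinear actions
  let Lp : A × U → X →L[ℂ] X := fun p =>
    LinearMap.mkContinuous (IsLinearMap.mk' (l p) (hl2 p)) (C * ‖p‖)
      (fun x => by rw [mul_assoc]; exact (mul_assoc C ‖p‖ ‖x‖) ▸ (hC p x).1)
  let Rp : A × U → X →L[ℂ] X := fun p =>
    LinearMap.mkContinuous (IsLinearMap.mk' (fun x => r x p) (hr2 p)) (C * ‖p‖)
      (fun x => by rw [mul_assoc]; exact (mul_assoc C ‖p‖ ‖x‖) ▸ (hC p x).2)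
  let Lx : X → (A × U) →L[ℂ] X := fun x =>
    LinearMap.mkContinuous (IsLinearMap.mk' (fun p => l p x) (hl1 x)) (C * ‖x‖)
      (fun p => by
        calc ‖l p x‖ ≤ C * ‖p‖ * ‖x‖ := (hC p x).1
        _ = C * ‖x‖ * ‖p‖ := by ring)
  let Rx : X → (A × U) →L[ℂ] X := fun x =>
    LinearMap.mkContinuous (IsLinearMap.mk' (fun p => r x p) (hr1 x)) (C * ‖x‖)
      (fun p => by
        calc ‖r x p‖ ≤ C * ‖p‖ * ‖x‖ := (hC p x).2
        _ = C * ‖x‖ * ‖p‖ := by ring)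
  have hl0 : ∀ x : X, l 0 x = 0 := fun x => (hl1 x).map_zero
  have hr0 : ∀ x : X, r x 0 = 0 := fun x => (hr1 x).map_zero
  have hLp : ∀ p x, Lp p x = l p x := fun p x => rfl
  have hRp : ∀ p x, Rp p x = r x p := fun p x => rfl
  have hLx : ∀ x p, Lx x p = l p x := fun x p => rfl
  have hRx : ∀ x p, Rx x p = r x p := fun x p => rfl
  -- The two key derivation identities
  have hmul1 : ∀ (b : A) (u : U),
      lauMul (fun a => θ a) (b, 0) (0, u) = ((0 : A), θ b • u) := by
    intro b u; simp [lauMul]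
  have hmul2 : ∀ (b : A) (u : U),
      lauMul (fun a => θ a) (0, u) (b, 0) = ((0 : A), θ b • u) := by
    intro b u; simp [lauMul]
  have hsm : ∀ (b : A) (u : U), D ((0 : A), θ b • u) = θ b • D (0, u) := by
    intro b u
    have h : ((0 : A), θ b • u) = θ b • ((0 : A), u) := by
      simp [Prod.smul_mk]
    rw [h, map_smul]
  have key1 : ∀ (b : A) (u : U),
      r (D (b, 0)) (0, u) = θ b • D (0, u) - l (b, 0) (D (0, u)) := by
    intro b u
    have h := hD (b, 0) (0, u)
    rw [hmul1, hsm] at h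
    rw [h]; abel
  have key2 : ∀ (b : A) (u : U),
      l (0, u) (D (b, 0)) = θ b • D (0, u) - r (D (0, u)) (b, 0) := by
    intro b u
    have h := hD (0, u) (b, 0)
    rw [hmul2, hsm] at h
    rw [h]; abel
  -- Part 1: continuity of δ₁
  have part1 : (∀ x : X, (∀ u : U, l (0, u) x = 0 ∧ r x (0, u) = 0) → x = 0) →
      Continuous (fun a : A => D (a, 0)) := by
    intro hann
    have : Continuous δ₁ := by
      apply δ₁.continuous_of_seq_closed_graph
      intro s a x hs hx
      have hb : Tendsto (fun n => s n - a) atTop (𝓝 0) := by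
        simpa using hs.sub (tendsto_const_nhds (x := a))
      have hdx : Tendsto (fun n => δ₁ (s n) - δ₁ a) atTop (𝓝 (x - δ₁ a)) := by
        simpa using hx.sub (tendsto_const_nhds (x := δ₁ a))
      have hpair : Tendsto (fun n => ((s n - a : A), (0 : U))) atTop (𝓝 (0 : A × U)) := by
        have : Tendsto (fun n => ((s n - a : A), (0 : U))) atTop (𝓝 ((0 : A), (0 : U))) :=
          hb.prodMk_nhds tendsto_const_nhds
        exact this
      have hθb : Tendsto (fun n => θ (s n - a)) atTop (𝓝 0) := by
        have := (θ.continuous.tendsto 0).comp hb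
        simpa only [Function.comp_def, map_zero] using this
      have hy : x - δ₁ a = 0 := by
        apply hann
        intro u
        constructor
        · -- l (0,u) (x - δ₁ a) = 0
          have h1 : Tendsto (fun n => l (0, u) (δ₁ (s n) - δ₁ a)) atTop
              (𝓝 (l (0, u) (x - δ₁ a))) := by
            have := ((Lp (0, u)).continuous.tendsto (x - δ₁ a)).comp hdx
            simpa [Function.comp_def, hLp] using this
          have h2 : Tendsto (fun n => l (0, u) (δ₁ (s n) - δ₁ a)) atTop (𝓝 0) := by
            have heq : (fun n => l (0, u) (δ₁ (s n) - δ₁ a)) =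
                fun n => θ (s n - a) • D (0, u) - r (D (0, u)) (s n - a, 0) := by
              funext n
              rw [← map_sub δ₁, hδ₁e]
              exact key2 (s n - a) u
            rw [heq]
            have t1 : Tendsto (fun n => θ (s n - a) • D ((0 : A), u)) atTop (𝓝 0) := by
              simpa using hθb.smul_const (D ((0 : A), u))
            have t2 : Tendsto (fun n => r (D ((0 : A), u)) (s n - a, 0)) atTop (𝓝 0) := by
              have := ((Rx (D ((0 : A), u))).continuous.tendsto 0).comp hpair
              simpa only [Function.comp_def, hRx, hr0, map_zero] using this
            simpa using t1.sub t2
          exact tendsto_nhds_unique h1 h2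
        · -- r (x - δ₁ a) (0,u) = 0
          have h1 : Tendsto (fun n => r (δ₁ (s n) - δ₁ a) (0, u)) atTop
              (𝓝 (r (x - δ₁ a) (0, u))) := by
            have := ((Rp (0, u)).continuous.tendsto (x - δ₁ a)).comp hdx
            simpa [Function.comp_def, hRp] using this
          have h2 : Tendsto (fun n => r (δ₁ (s n) - δ₁ a) (0, u)) atTop (𝓝 0) := by
            have heq : (fun n => r (δ₁ (s n) - δ₁ a) (0, u)) =
                fun n => θ (s n - a) • D (0, u) - l (s n - a, 0) (D (0, u)) := by
              funext n
              rw [← map_sub δ₁, hδ₁e]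
              exact key1 (s n - a) u
            rw [heq]
            have t1 : Tendsto (fun n => θ (s n - a) • D ((0 : A), u)) atTop (𝓝 0) := by
              simpa using hθb.smul_const (D ((0 : A), u))
            have t2 : Tendsto (fun n => l (s n - a, 0) (D ((0 : A), u))) atTop (𝓝 0) := by
              have := ((Lx (D ((0 : A), u))).continuous.tendsto 0).comp hpair
              simpa only [Function.comp_def, hLx, hl0, map_zero] using this
            simpa using t1.sub t2
          exact tendsto_nhds_unique h1 h2
      have : x = δ₁ a := by
        have := sub_eq_zero.mp hy
        exact this
      exact this
    exact this
  -- Part 2: continuity of δ₂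
  have part2 : (∀ x : X, (∀ a : A, l (a, 0) x = r x (a, 0)) → x = 0) →
      Continuous (fun u : U => D (0, u)) := by
    intro hZ
    have : Continuous δ₂ := by
      apply δ₂.continuous_of_seq_closed_graph
      intro s u x hs hx
      have hv : Tendsto (fun n => s n - u) atTop (𝓝 0) := by
        simpa using hs.sub (tendsto_const_nhds (x := u))
      have hdx : Tendsto (fun n => δ₂ (s n) - δ₂ u) atTop (𝓝 (x - δ₂ u)) := by
        simpa using hx.sub (tendsto_const_nhds (x := δ₂ u))
      have hpair : Tendsto (fun n => ((0 : A), (s n - u : U))) atTop (𝓝 (0 : A × U)) := by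
        have : Tendsto (fun n => ((0 : A), (s n - u : U))) atTop (𝓝 ((0 : A), (0 : U))) :=
          tendsto_const_nhds.prodMk_nhds hv
        exact this
      have hy : x - δ₂ u = 0 := by
        apply hZ
        intro a
        -- LHS tends to l (a,0) (x - δ₂ u) - r (x - δ₂ u) (a,0); also tends to 0
        have h1 : Tendsto
            (fun n => l (a, 0) (δ₂ (s n) - δ₂ u) - r (δ₂ (s n) - δ₂ u) (a, 0)) atTop
            (𝓝 (l (a, 0) (x - δ₂ u) - r (x - δ₂ u) (a, 0))) := by
          have t1 := ((Lp (a, 0)).continuous.tendsto (x - δ₂ u)).comp hdx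
          have t2 := ((Rp (a, 0)).continuous.tendsto (x - δ₂ u)).comp hdx
          have t1' : Tendsto (fun n => l (a, 0) (δ₂ (s n) - δ₂ u)) atTop
              (𝓝 (l (a, 0) (x - δ₂ u))) := by simpa [Function.comp_def, hLp] using t1
          have t2' : Tendsto (fun n => r (δ₂ (s n) - δ₂ u) (a, 0)) atTop
              (𝓝 (r (x - δ₂ u) (a, 0))) := by simpa [Function.comp_def, hRp] using t2
          exact t1'.sub t2'
        have h2 : Tendsto
            (fun n => l (a, 0) (δ₂ (s n) - δ₂ u) - r (δ₂ (s n) - δ₂ u) (a, 0)) atTop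
            (𝓝 0) := by
          have heq : (fun n => l (a, 0) (δ₂ (s n) - δ₂ u) - r (δ₂ (s n) - δ₂ u) (a, 0)) =
              fun n => l (0, s n - u) (D (a, 0)) - r (D (a, 0)) (0, s n - u) := by
            funext n
            have e1 : l (a, 0) (δ₂ (s n) - δ₂ u) =
                θ a • D (0, s n - u) - r (D (a, 0)) (0, s n - u) := by
              rw [← map_sub δ₂, hδ₂e]
              have := key1 a (s n - u)
              rw [this]; abel
            have e2 : r (δ₂ (s n) - δ₂ u) (a, 0) =
                θ a • D (0, s n - u) - l (0, s n - u) (D (a, 0)) := by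
              rw [← map_sub δ₂, hδ₂e]
              have := key2 a (s n - u)
              rw [this]; abel
            rw [e1, e2]; abel
          rw [heq]
          have t1 : Tendsto (fun n => l ((0 : A), s n - u) (D (a, 0))) atTop (𝓝 0) := by
            have := ((Lx (D (a, 0))).continuous.tendsto 0).comp hpair
            simpa only [Function.comp_def, hLx, hl0, map_zero] using this
          have t2 : Tendsto (fun n => r (D (a, 0)) ((0 : A), s n - u)) atTop (𝓝 0) := by
            have := ((Rx (D (a, 0))).continuous.tendsto 0).comp hpair
            simpa only [Function.comp_def, hRx, hr0, map_zero] using this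
          simpa using t1.sub t2
        exact sub_eq_zero.mp (tendsto_nhds_unique h1 h2)
      exact sub_eq_zero.mp hy
    exact this
  refine ⟨part1, part2, ?_⟩
  intro h1 h2
  have c1 := part1 h1
  have c2 := part2 h2
  have hDeq : ⇑D = fun p : A × U => D (p.1, 0) + D (0, p.2) := by
    funext p
    rw [← map_add]
    congr 1
    ext <;> simp
  rw [hDeq]
  exact (c1.comp continuous_fst).add (c2.comp continuous_snd)
end

section
/- Let X be a simple Banach (A ×_θ U)-bimodule (its only closed subbimodules are {0} and X) and D : A ×_θ U → X a derivation with components δ₁, δ₂. Then either δ₁ is continuous or ann_X(U) = X (i.e. U annihilates X on both sides). -/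
open Filter Topology

/-- If X is a simple Banach (A ×_θ U)-bimodule (its only closed
subbimodules are {0} and X) and D : A ×_θ U → X is a derivation with components
δ₁, δ₂, then either δ₁ is continuous or ann_X(U) = X. -/
theorem simple_module_delta1_dichotomy {A U X : Type*}
    [NonUnitalNormedRing A] [NormedSpace ℂ A] [IsScalarTower ℂ A A]
    [SMulCommClass ℂ A A] [CompleteSpace A]
    [NonUnitalNormedRing U] [NormedSpace ℂ U] [IsScalarTower ℂ U U]
    [SMulCommClass ℂ U U] [CompleteSpace U]
    [NormedAddCommGroup X] [NormedSpace ℂ X] [CompleteSpace X]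
    (θ : A →L[ℂ] ℂ) (hθmul : ∀ a b : A, θ (a * b) = θ a * θ b) (hθ0 : θ ≠ 0)
    (l : A × U → X → X) (r : X → A × U → X)
    (hbm : IsLauBimodule (fun a => θ a) l r)
    (hsimple : ∀ S : Submodule ℂ X, IsClosed (S : Set X) →
      (∀ (p : A × U) (x : X), x ∈ S → l p x ∈ S ∧ r x p ∈ S) →
      S = ⊥ ∨ S = ⊤)
    (D : (A × U) →ₗ[ℂ] X)
    (hD : ∀ p q : A × U, D (lauMul (fun a => θ a) p q) = l p (D q) + r (D p) q) :
    Continuous (fun a : A => D (a, 0)) ∨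
    (∀ (x : X) (u : U), l (0, u) x = 0 ∧ r x (0, u) = 0) := by
  classical
  obtain ⟨hl1, hl2, hr1, hr2, hlassoc, hrassoc, hcomp, C, hC⟩ := hbm
  -- continuity facts
  have hlcont : ∀ p, Continuous (l p) := fun p =>
    AddMonoidHomClass.continuous_of_bound (IsLinearMap.mk' (l p) (hl2 p)) (C * ‖p‖)
      (fun x => by have := (hC p x).1; simpa [mul_assoc] using this)
  have hrcont : ∀ p, Continuous (fun x : X => r x p) := fun p =>
    AddMonoidHomClass.continuous_of_bound (IsLinearMap.mk' _ (hr2 p)) (C * ‖p‖)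
      (fun x => by have := (hC p x).2; simpa [mul_assoc] using this)
  have hlcont' : ∀ x, Continuous (fun p : A × U => l p x) := fun x =>
    AddMonoidHomClass.continuous_of_bound (IsLinearMap.mk' _ (hl1 x)) (C * ‖x‖)
      (fun p => by
        show ‖l p x‖ ≤ C * ‖x‖ * ‖p‖
        have := (hC p x).1; nlinarith [norm_nonneg p, norm_nonneg x])
  have hrcont' : ∀ x, Continuous (fun p : A × U => r x p) := fun x =>
    AddMonoidHomClass.continuous_of_bound (IsLinearMap.mk' _ (hr1 x)) (C * ‖x‖)
      (fun p => by
        show ‖r x p‖ ≤ C * ‖x‖ * ‖p‖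
        have := (hC p x).2; nlinarith [norm_nonneg p, norm_nonneg x])
  have hl0 : ∀ x, l 0 x = 0 := fun x => (hl1 x).map_zero
  have hr0 : ∀ x, r x 0 = 0 := fun x => (hr1 x).map_zero
  -- δ₁
  set δ : A → X := fun a => D (a, 0) with hδ
  -- the separating space
  set S : Submodule ℂ X :=
    { carrier := {x | ∃ f : ℕ → A, Tendsto f atTop (𝓝 0) ∧
        Tendsto (fun n => δ (f n)) atTop (𝓝 x)}
      add_mem' := by
        rintro x y ⟨f, hf0, hfx⟩ ⟨g, hg0, hgy⟩
        refine ⟨f + g, by have h := hf0.add hg0; rw [add_zero] at h; exact h, ?_⟩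
        have e : (fun n => δ ((f + g) n)) = fun n => δ (f n) + δ (g n) := by
          funext n
          show D ((f n + g n, (0 : U)) : A × U) = D ((f n, 0) : A × U) + D ((g n, 0) : A × U)
          rw [show ((f n + g n, (0 : U)) : A × U) = (f n, 0) + (g n, 0) from by
            simp [Prod.ext_iff], map_add]
        rw [e]
        exact hfx.add hgy
      zero_mem' := ⟨0, tendsto_const_nhds, by
        have e : (fun n : ℕ => δ ((0 : ℕ → A) n)) = fun _ : ℕ => (0 : X) := by
          funext n
          show D (((0 : A), (0 : U)) : A × U) = 0
          exact map_zero D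
        rw [e]; exact tendsto_const_nhds⟩
      smul_mem' := by
        rintro c x ⟨f, hf0, hfx⟩
        refine ⟨c • f, by have h := hf0.const_smul c; rw [smul_zero] at h; exact h, ?_⟩
        have e : (fun n => δ ((c • f) n)) = fun n => c • δ (f n) := by
          funext n
          show D ((c • f n, (0 : U)) : A × U) = c • D ((f n, 0) : A × U)
          rw [show ((c • f n, (0 : U)) : A × U) = c • ((f n, 0) : A × U) from by
            simp [Prod.ext_iff], map_smul]
        rw [e]
        exact hfx.const_smul c } with hS
  -- membership in S annihilates U
  have hann : ∀ x ∈ S, ∀ u : U, l (0, u) x = 0 ∧ r x (0, u) = 0 := by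
    rintro x ⟨f, hf0, hfx⟩ u
    have hθf : Tendsto (fun n => θ (f n)) atTop (𝓝 0) := by
      have := (θ.continuous.tendsto 0).comp hf0
      simpa [Function.comp_def] using this
    have hfp : Tendsto (fun n => ((f n, (0 : U)) : A × U)) atTop (𝓝 0) := by
      have := hf0.prodMk_nhds (tendsto_const_nhds : Tendsto (fun _ : ℕ => (0 : U)) atTop (𝓝 0))
      exact this
    constructor
    · -- left annihilation
      have key : ∀ a : A, l (0, u) (δ a) = θ a • D (0, u) - r (D (0, u)) (a, 0) := by
        intro a
        have h1 : lauMul (fun a => θ a) ((0 : A), u) (a, 0) = θ a • ((0 : A), u) := by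
          simp [lauMul, Prod.ext_iff]
        have h2 := hD ((0 : A), u) (a, 0)
        rw [h1, map_smul] at h2
        have : l (0, u) (δ a) = θ a • D (0, u) - r (D ((0 : A), u)) (a, 0) := by
          show l (0, u) (D ((a, 0) : A × U)) = _
          rw [eq_comm] at h2; linear_combination (norm := abel) h2
        exact this
      have t1 : Tendsto (fun n => l (0, u) (δ (f n))) atTop (𝓝 (l (0, u) x)) :=
        ((hlcont (0, u)).tendsto x).comp hfx
      have t2 : Tendsto (fun n => l (0, u) (δ (f n))) atTop (𝓝 0) := by
        have e : (fun n => l (0, u) (δ (f n))) =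
            fun n => θ (f n) • D ((0 : A), u) - r (D ((0 : A), u)) (f n, 0) := by
          funext n; exact key (f n)
        rw [e]
        have ta : Tendsto (fun n => θ (f n) • D ((0 : A), u)) atTop (𝓝 0) := by
          simpa using hθf.smul (tendsto_const_nhds :
            Tendsto (fun _ : ℕ => D ((0 : A), u)) atTop (𝓝 (D ((0 : A), u))))
        have tb : Tendsto (fun n => r (D ((0 : A), u)) ((f n, 0) : A × U)) atTop (𝓝 0) := by
          have := ((hrcont' (D ((0 : A), u))).tendsto 0).comp hfp
          simpa [hr0, Function.comp_def] using this
        simpa using ta.sub tb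
      exact tendsto_nhds_unique t1 t2
    · -- right annihilation
      have key : ∀ a : A, r (δ a) (0, u) = θ a • D (0, u) - l (a, 0) (D (0, u)) := by
        intro a
        have h1 : lauMul (fun a => θ a) (a, (0 : U)) ((0 : A), u) = θ a • ((0 : A), u) := by
          simp [lauMul, Prod.ext_iff]
        have h2 := hD (a, (0 : U)) ((0 : A), u)
        rw [h1, map_smul] at h2
        show r (D ((a, 0) : A × U)) (0, u) = _
        rw [eq_comm] at h2; linear_combination (norm := abel) h2
      have t1 : Tendsto (fun n => r (δ (f n)) (0, u)) atTop (𝓝 (r x (0, u))) :=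
        ((hrcont ((0 : A), u)).tendsto x).comp hfx
      have t2 : Tendsto (fun n => r (δ (f n)) (0, u)) atTop (𝓝 0) := by
        have e : (fun n => r (δ (f n)) ((0 : A), u)) =
            fun n => θ (f n) • D ((0 : A), u) - l (f n, 0) (D ((0 : A), u)) := by
          funext n; exact key (f n)
        rw [e]
        have ta : Tendsto (fun n => θ (f n) • D ((0 : A), u)) atTop (𝓝 0) := by
          simpa using hθf.smul (tendsto_const_nhds :
            Tendsto (fun _ : ℕ => D ((0 : A), u)) atTop (𝓝 (D ((0 : A), u))))
        have tb : Tendsto (fun n => l ((f n, 0) : A × U) (D ((0 : A), u))) atTop (𝓝 0) := by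
          have := ((hlcont' (D ((0 : A), u))).tendsto 0).comp hfp
          simpa [hl0, Function.comp_def] using this
        simpa using ta.sub tb
      exact tendsto_nhds_unique t1 t2
  -- S is a subbimodule
  have hstable : ∀ (p : A × U) (x : X), x ∈ S → l p x ∈ S ∧ r x p ∈ S := by
    rintro ⟨b, u⟩ x hx
    obtain ⟨f, hf0, hfx⟩ := hx
    have hfp : Tendsto (fun n => ((f n, (0 : U)) : A × U)) atTop (𝓝 0) := by
      have := hf0.prodMk_nhds (tendsto_const_nhds : Tendsto (fun _ : ℕ => (0 : U)) atTop (𝓝 0))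
      exact this
    have hbu : ((b, u) : A × U) = (b, 0) + (0, u) := by simp [Prod.ext_iff]
    have hlx : l (b, 0) x ∈ S := by
      refine ⟨fun n => b * f n, ?_, ?_⟩
      · simpa [Function.comp_def] using ((continuous_const.mul continuous_id).tendsto (0 : A)).comp hf0
      · have key : ∀ a : A, δ (b * a) = l (b, 0) (δ a) + r (δ b) (a, 0) := by
          intro a
          have h1 : lauMul (fun a => θ a) (b, (0 : U)) (a, 0) = ((b * a, 0) : A × U) := by
            simp [lauMul, Prod.ext_iff]
          have h2 := hD (b, (0 : U)) (a, 0)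
          rw [h1] at h2
          exact h2
        have ta : Tendsto (fun n => l ((b, (0 : U)) : A × U) (δ (f n))) atTop
            (𝓝 (l (b, 0) x)) := ((hlcont (b, 0)).tendsto x).comp hfx
        have tb : Tendsto (fun n => r (δ b) ((f n, 0) : A × U)) atTop (𝓝 0) := by
          have := ((hrcont' (δ b)).tendsto 0).comp hfp
          simpa [hr0, Function.comp_def] using this
        have h := ta.add tb
        simp only [add_zero] at h
        have e : (fun n => δ (b * f n)) =
            fun n => l ((b, (0 : U)) : A × U) (δ (f n)) + r (δ b) ((f n, 0) : A × U) := by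
          funext n; exact key (f n)
        rw [e]; exact h
    have hrx : r x (b, 0) ∈ S := by
      refine ⟨fun n => f n * b, ?_, ?_⟩
      · simpa [Function.comp_def] using ((continuous_id.mul continuous_const).tendsto (0 : A)).comp hf0
      · have key : ∀ a : A, δ (a * b) = l (a, 0) (δ b) + r (δ a) (b, 0) := by
          intro a
          have h1 : lauMul (fun a => θ a) (a, (0 : U)) (b, 0) = ((a * b, 0) : A × U) := by
            simp [lauMul, Prod.ext_iff]
          have h2 := hD (a, (0 : U)) (b, 0)
          rw [h1] at h2
          exact h2
        have ta : Tendsto (fun n => r (δ (f n)) ((b, (0 : U)) : A × U)) atTop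
            (𝓝 (r x (b, 0))) := ((hrcont (b, 0)).tendsto x).comp hfx
        have tb : Tendsto (fun n => l ((f n, 0) : A × U) (δ b)) atTop (𝓝 0) := by
          have := ((hlcont' (δ b)).tendsto 0).comp hfp
          simpa [hl0, Function.comp_def] using this
        have h := tb.add ta
        simp only [zero_add] at h
        have e : (fun n => δ (f n * b)) =
            fun n => l ((f n, 0) : A × U) (δ b) + r (δ (f n)) ((b, (0 : U)) : A × U) := by
          funext n; exact key (f n)
        rw [e]; exact h
    obtain ⟨hannl, hannr⟩ := hann x ⟨f, hf0, hfx⟩ u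
    constructor
    · have h : l (b, u) x = l (b, 0) x + l (0, u) x := by
        rw [hbu]; exact (hl1 x).map_add _ _
      rw [h, hannl, add_zero]; exact hlx
    · have h : r x (b, u) = r x (b, 0) + r x (0, u) := by
        rw [hbu]; exact (hr1 x).map_add _ _
      rw [h, hannr, add_zero]; exact hrx
  -- S is closed
  have hclosed : IsClosed (S : Set X) := by
    apply IsSeqClosed.isClosed
    intro xs p hxs hxsp
    have hsel : ∀ k : ℕ, ∃ a : A, ‖a‖ < 1 / (k + 1) ∧ ‖δ a - xs k‖ < 1 / (k + 1) := by
      intro k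
      obtain ⟨f, hf0, hfx⟩ := hxs k
      have hpos : (0 : ℝ) < 1 / (k + 1) := by positivity
      have e1 : ∀ᶠ n in atTop, ‖f n‖ < 1 / (k + 1) := by
        have h0 : Tendsto (fun n => ‖f n‖) atTop (𝓝 0) := by simpa using hf0.norm
        exact h0.eventually (gt_mem_nhds hpos)
      have e2 : ∀ᶠ n in atTop, ‖δ (f n) - xs k‖ < 1 / (k + 1) := by
        have h0 : Tendsto (fun n => ‖δ (f n) - xs k‖) atTop (𝓝 0) := by
          simpa using (hfx.sub (tendsto_const_nhds :
            Tendsto (fun _ : ℕ => xs k) atTop (𝓝 (xs k)))).norm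
        exact h0.eventually (gt_mem_nhds hpos)
      obtain ⟨n, h1, h2⟩ := (e1.and e2).exists
      exact ⟨f n, h1, h2⟩
    choose a ha1 ha2 using hsel
    have hinv : Tendsto (fun k : ℕ => 1 / ((k : ℝ) + 1)) atTop (𝓝 0) :=
      tendsto_one_div_add_atTop_nhds_zero_nat
    refine ⟨a, ?_, ?_⟩
    · rw [tendsto_zero_iff_norm_tendsto_zero]
      exact squeeze_zero (fun k => norm_nonneg _) (fun k => (ha1 k).le) hinv
    · rw [tendsto_iff_norm_sub_tendsto_zero]
      have hb : ∀ k, ‖δ (a k) - p‖ ≤ 1 / (k + 1) + ‖xs k - p‖ := by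
        intro k
        calc ‖δ (a k) - p‖ = ‖(δ (a k) - xs k) + (xs k - p)‖ := by abel_nf
          _ ≤ ‖δ (a k) - xs k‖ + ‖xs k - p‖ := norm_add_le _ _
          _ ≤ 1 / (k + 1) + ‖xs k - p‖ := by
              have := (ha2 k).le; gcongr
      have hlim : Tendsto (fun k : ℕ => 1 / ((k : ℝ) + 1) + ‖xs k - p‖) atTop (𝓝 0) := by
        have h2 : Tendsto (fun k => ‖xs k - p‖) atTop (𝓝 0) := by
          rw [← tendsto_iff_norm_sub_tendsto_zero]; exact hxsp
        simpa using hinv.add h2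
      exact squeeze_zero (fun k => norm_nonneg _) hb hlim
  -- apply simplicity
  rcases hsimple S hclosed hstable with hbot | htop
  · left
    have hc : Continuous (D ∘ₗ LinearMap.inl ℂ A U) := by
      apply LinearMap.continuous_of_seq_closed_graph
      intro f x y hfx hfy
      have hmem : y - D (x, 0) ∈ S := by
        refine ⟨fun n => f n - x, by
          simpa using hfx.sub (tendsto_const_nhds :
            Tendsto (fun _ : ℕ => x) atTop (𝓝 x)), ?_⟩
        have e : (fun n => δ (f n - x)) = fun n => D ((f n, 0) : A × U) - D ((x, 0) : A × U) := by
          funext n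
          show D ((f n - x, (0 : U)) : A × U) = _
          rw [show ((f n - x, (0 : U)) : A × U) = (f n, 0) - (x, 0) from by
            simp [Prod.ext_iff], map_sub]
        rw [e]
        have hy : Tendsto (fun n => D ((f n, (0 : U)) : A × U)) atTop (𝓝 y) := hfy
        simpa using hy.sub (tendsto_const_nhds :
          Tendsto (fun _ : ℕ => D ((x, (0 : U)) : A × U)) atTop (𝓝 (D (x, 0))))
      rw [hbot] at hmem
      have h0 : y - D (x, 0) = 0 := by simpa using hmem
      have := sub_eq_zero.mp h0
      simpa using this
    exact hc
  · right
    intro x u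
    exact hann x (by rw [htop]; trivial) u
end

section
/- Let D : A ×_θ U → U be a derivation (U viewed as an ideal, hence Banach (A ×_θ U)-bimodule) with components δ₁ : A → U and δ₂ : U → U. Then U·S(δ₁) = S(δ₁)·U = {0}, where S(δ₁) is the separating space of δ₁. Consequently, if ann_U(U) = {0}, then δ₁ is continuous, and D is continuous if and only if δ₂ is continuous. -/
open Filter Topology

/-- Let D : A ×_θ U → U be a derivation (U regarded as a closed ideal
of A ×_θ U, hence a Banach (A ×_θ U)-bimodule via (a,u)·v = θ(a)v + uv and
v·(a,u) = θ(a)v + vu), with components δ₁(a) = D((a,0)), δ₂(u) = D((0,u)).  Then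
U·S(δ₁) = S(δ₁)·U = {0}; consequently, if ann_U(U) = {0}, then δ₁ is continuous and
D is continuous if and only if δ₂ is continuous. -/
theorem lau_derivation_into_U {A U : Type*}
    [NonUnitalNormedRing A] [NormedSpace ℂ A] [IsScalarTower ℂ A A]
    [SMulCommClass ℂ A A] [CompleteSpace A]
    [NonUnitalNormedRing U] [NormedSpace ℂ U] [IsScalarTower ℂ U U]
    [SMulCommClass ℂ U U] [CompleteSpace U]
    (θ : A →L[ℂ] ℂ) (hθmul : ∀ a b : A, θ (a * b) = θ a * θ b) (hθ0 : θ ≠ 0)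
    (D : (A × U) →ₗ[ℂ] U)
    (hD : ∀ p q : A × U, D (lauMul (fun a => θ a) p q) =
      (θ p.1 • D q + p.2 * D q) + (θ q.1 • D p + D p * q.2)) :
    (∀ x : U,
      (∃ a : ℕ → A, Tendsto a atTop (nhds 0) ∧
        Tendsto (fun n => D (a n, 0)) atTop (nhds x)) →
      ∀ u : U, u * x = 0 ∧ x * u = 0) ∧
    ((∀ x : U, (∀ u : U, u * x = 0 ∧ x * u = 0) → x = 0) →
      Continuous (fun a : A => D (a, 0)) ∧
      (Continuous D ↔ Continuous (fun u : U => D (0, u)))) := by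

  -- Key fact: D(a,0) * u = 0 and u * D(a,0) = 0 for all a, u.
  have key : ∀ (a : A) (u : U), D (a, 0) * u = 0 ∧ u * D (a, 0) = 0 := by
    intro a u
    have hsmul : D ((0 : A), θ a • u) = θ a • D ((0 : A), u) := by
      have : ((0 : A), θ a • u) = θ a • ((0 : A), u) := by
        simp [Prod.smul_mk]
      rw [this, map_smul]
    constructor
    · have h1 := hD (a, 0) (0, u)
      simp only [lauMul, mul_zero, zero_mul, map_zero, zero_smul, smul_zero,
        add_zero, zero_add] at h1
      rw [hsmul] at h1
      exact left_eq_add.mp h1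
    · have h1 := hD (0, u) (a, 0)
      simp only [lauMul, mul_zero, zero_mul, map_zero, zero_smul, smul_zero,
        add_zero, zero_add] at h1
      rw [hsmul] at h1
      exact right_eq_add.mp h1
  constructor
  · rintro x ⟨a, -, hDx⟩ u
    constructor
    · have h1 : Tendsto (fun n => u * D (a n, 0)) atTop (nhds (u * x)) :=
        Tendsto.mul tendsto_const_nhds hDx
      have h2 : Tendsto (fun n => u * D (a n, 0)) atTop (nhds 0) := by
        simpa using tendsto_const_nhds.congr
          (fun n => ((key (a n) u).2).symm)
      exact tendsto_nhds_unique h1 h2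
    · have h1 : Tendsto (fun n => D (a n, 0) * u) atTop (nhds (x * u)) :=
        Tendsto.mul hDx tendsto_const_nhds
      have h2 : Tendsto (fun n => D (a n, 0) * u) atTop (nhds 0) := by
        simpa using tendsto_const_nhds.congr
          (fun n => ((key (a n) u).1).symm)
      exact tendsto_nhds_unique h1 h2
  · intro hann
    have hδ1 : ∀ a : A, D (a, 0) = 0 := by
      intro a
      exact hann _ (fun u => ⟨(key a u).2, (key a u).1⟩)
    have hDeq : ∀ p : A × U, D p = D (0, p.2) := by
      intro p
      have : (p.1, p.2) = ((p.1, (0:U)) : A × U) + ((0:A), p.2) := by simp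
      calc D p = D ((p.1, (0:U)) + ((0:A), p.2)) := by rw [← this]
        _ = D (p.1, (0:U)) + D (0, p.2) := map_add D _ _
        _ = D (0, p.2) := by rw [hδ1]; simp
    refine ⟨by simpa [hδ1] using continuous_const, ?_⟩
    constructor
    · intro hDc
      exact hDc.comp (Continuous.prodMk_right (0 : A))
    · intro hc
      have : Continuous fun p : A × U => D (0, p.2) := hc.comp continuous_snd
      exact this.congr (fun p => (hDeq p).symm)
end

section
/- A linear map D : A ×_θ U → A ×_θ U is a derivation if and only if D((a,u)) = (δ₁(a) + τ₁(u), δ₂(a) + τ₂(u)) where: δ₁ : A → A and δ₂ : A → U are derivations satisfying θ(δ₁(a))u + δ₂(a)u = 0 and θ(δ₁(a))u + uδ₂(a) = 0 for all a ∈ A, u ∈ U; τ₁ : U → A is an A-bimodule homomorphism (for the action a·u = θ(a)u) with τ₁(uu') = 0 for all u, u' ∈ U; and τ₂ : U → U is linear with τ₂(uu') = θ(τ₁(u))u' + θ(τ₁(u'))u + uτ₂(u') + τ₂(u)u' for all u, u' ∈ U. -/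
open Filter Topology

/-- A linear map D : A ×_θ U → A ×_θ U is a derivation if and only if
D((a,u)) = (δ₁(a) + τ₁(u), δ₂(a) + τ₂(u)) where δ₁ : A → A is a derivation,
δ₂ : A → U is a derivation for the module action a·u = θ(a)u, they satisfy
θ(δ₁(a))u + δ₂(a)u = 0 = θ(δ₁(a))u + uδ₂(a); τ₁ : U → A is an A-bimodule
homomorphism (for the action a·u = θ(a)u) with τ₁(uu') = 0; and τ₂ : U → U
satisfies τ₂(uu') = θ(τ₁(u))u' + θ(τ₁(u'))u + uτ₂(u') + τ₂(u)u'. -/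
theorem lau_derivation_on_lau_product {A U : Type*}
    [NonUnitalNormedRing A] [NormedSpace ℂ A] [IsScalarTower ℂ A A]
    [SMulCommClass ℂ A A] [CompleteSpace A]
    [NonUnitalNormedRing U] [NormedSpace ℂ U] [IsScalarTower ℂ U U]
    [SMulCommClass ℂ U U] [CompleteSpace U]
    (θ : A →L[ℂ] ℂ) (hθmul : ∀ a b : A, θ (a * b) = θ a * θ b) (hθ0 : θ ≠ 0)
    (D : (A × U) →ₗ[ℂ] A × U) :
    (∀ p q : A × U, D (lauMul (fun a => θ a) p q) =
      lauMul (fun a => θ a) p (D q) + lauMul (fun a => θ a) (D p) q) ↔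
    ∃ (δ₁ : A →ₗ[ℂ] A) (δ₂ : A →ₗ[ℂ] U) (τ₁ : U →ₗ[ℂ] A) (τ₂ : U →ₗ[ℂ] U),
      (∀ p : A × U, D p = (δ₁ p.1 + τ₁ p.2, δ₂ p.1 + τ₂ p.2)) ∧
      -- δ₁ is a derivation on A
      (∀ a b : A, δ₁ (a * b) = a * δ₁ b + δ₁ a * b) ∧
      -- δ₂ is a derivation A → U for the module action a·u = θ(a)u
      (∀ a b : A, δ₂ (a * b) = θ a • δ₂ b + θ b • δ₂ a) ∧
      (∀ (a : A) (u : U), θ (δ₁ a) • u + δ₂ a * u = 0) ∧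
      (∀ (a : A) (u : U), θ (δ₁ a) • u + u * δ₂ a = 0) ∧
      -- τ₁ is an A-bimodule homomorphism for the action a·u = θ(a)u
      (∀ (a : A) (u : U), a * τ₁ u = θ a • τ₁ u ∧ τ₁ u * a = θ a • τ₁ u) ∧
      (∀ u u' : U, τ₁ (u * u') = 0) ∧
      (∀ u u' : U, τ₂ (u * u') =
        θ (τ₁ u) • u' + θ (τ₁ u') • u + u * τ₂ u' + τ₂ u * u') := by

  constructor
  · intro h
    refine ⟨(LinearMap.fst ℂ A U).comp (D.comp (LinearMap.inl ℂ A U)),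
      (LinearMap.snd ℂ A U).comp (D.comp (LinearMap.inl ℂ A U)),
      (LinearMap.fst ℂ A U).comp (D.comp (LinearMap.inr ℂ A U)),
      (LinearMap.snd ℂ A U).comp (D.comp (LinearMap.inr ℂ A U)),
      ?_, ?_, ?_, ?_, ?_, ?_, ?_, ?_⟩
    · intro p
      have hp : p = ((p.1, (0:U)) : A × U) + ((0:A), p.2) := by simp
      conv_lhs => rw [hp, map_add]
      simp [Prod.ext_iff]
    · intro a b
      have H := h (a, (0:U)) (b, (0:U))
      simp [lauMul, Prod.ext_iff] at H
      simpa using H.1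
    · intro a b
      have H := h (a, (0:U)) (b, (0:U))
      simp [lauMul, Prod.ext_iff] at H
      simpa using H.2
    · intro a u
      have H := h (a, (0:U)) ((0:A), u)
      have e : (((0:A), θ a • u) : A × U) = θ a • (((0:A), u) : A × U) := by
        simp
      simp only [lauMul, mul_zero, zero_mul, map_zero, zero_smul, smul_zero,
        add_zero, zero_add] at H
      rw [e, map_smul] at H
      have H2 := congrArg Prod.snd H
      simp [Prod.ext_iff] at H2 ⊢
      have := H2
      -- θ a • τ₂ u = θ a • τ₂ u + (θ (δ₁ a) • u + δ₂ a * u)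
      simpa [add_assoc, left_eq_add] using H2
    · intro a u
      have H := h ((0:A), u) (a, (0:U))
      have e : (((0:A), θ a • u) : A × U) = θ a • (((0:A), u) : A × U) := by
        simp
      simp only [lauMul, mul_zero, zero_mul, map_zero, zero_smul, smul_zero,
        add_zero, zero_add] at H
      rw [e, map_smul] at H
      have H2 := congrArg Prod.snd H
      simp [Prod.ext_iff] at H2 ⊢
      simpa [add_assoc, left_eq_add, add_comm] using H2
    · intro a u
      constructor
      · have H := h (a, (0:U)) ((0:A), u)
        have e : (((0:A), θ a • u) : A × U) = θ a • (((0:A), u) : A × U) := by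
          simp
        simp only [lauMul, mul_zero, zero_mul, map_zero, zero_smul, smul_zero,
          add_zero, zero_add] at H
        rw [e, map_smul] at H
        have H1 := congrArg Prod.fst H
        simp [Prod.ext_iff] at H1 ⊢
        simpa using H1.symm
      · have H := h ((0:A), u) (a, (0:U))
        have e : (((0:A), θ a • u) : A × U) = θ a • (((0:A), u) : A × U) := by
          simp
        simp only [lauMul, mul_zero, zero_mul, map_zero, zero_smul, smul_zero,
          add_zero, zero_add] at H
        rw [e, map_smul] at H
        have H1 := congrArg Prod.fst H
        simp [Prod.ext_iff] at H1 ⊢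
        simpa using H1.symm
    · intro u v
      have H := h ((0:A), u) ((0:A), v)
      simp [lauMul, Prod.ext_iff] at H
      simpa using H.1
    · intro u v
      have H := h ((0:A), u) ((0:A), v)
      simp [lauMul, Prod.ext_iff] at H
      have := H.2
      simp only [LinearMap.comp_apply, LinearMap.fst_apply, LinearMap.snd_apply,
        LinearMap.inr_apply]
      rw [this]
      abel
  · rintro ⟨δ₁, δ₂, τ₁, τ₂, hD, h1, h2, h3, h4, h5, h6, h7⟩ p q
    obtain ⟨a, u⟩ := p
    obtain ⟨b, v⟩ := q
    have e3 : δ₂ a * v = -(θ (δ₁ a) • v) :=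
      eq_neg_of_add_eq_zero_right (h3 a v)
    have e4 : u * δ₂ b = -(θ (δ₁ b) • u) :=
      eq_neg_of_add_eq_zero_right (h4 b u)
    simp only [lauMul, hD, Prod.mk_add_mk, Prod.ext_iff, map_add, map_smul,
      smul_add, add_smul, mul_add, add_mul, h1, h2, h6, h7, e3, e4,
      (h5 a v).1, (h5 b u).2]
    constructor
    · abel
    · abel
end

section
/- Let T : A ×_θ U → A ×_θ U be linear. Then T is a multiplier (i.e. pT(q) = T(p)q for all p, q) if and only if T((a,u)) = (R₁(a) + S₁(u), R₂(a) + S₂(u)) where R₁ : A → A is a multiplier; aS₁(u) = S₁(u)a = 0; θ(a)R₂(a') = θ(a')R₂(a); θ(a)S₂(u) = θ(R₁(a))u + R₂(a)u = θ(R₁(a))u + uR₂(a); and θ(S₁(u))u' + S₂(u)u' = θ(S₁(u'))u + uS₂(u'), for all a, a' ∈ A and u, u' ∈ U. -/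
open Filter Topology

/-- A linear map T : A ×_θ U → A ×_θ U is a multiplier
(pT(q) = T(p)q for all p,q) iff T((a,u)) = (R₁(a) + S₁(u), R₂(a) + S₂(u)) with
R₁ a multiplier on A; aS₁(u) = S₁(u)a = 0; θ(a)R₂(a') = θ(a')R₂(a);
θ(a)S₂(u) = θ(R₁(a))u + R₂(a)u = θ(R₁(a))u + uR₂(a); and
θ(S₁(u))u' + S₂(u)u' = θ(S₁(u'))u + uS₂(u'). -/
theorem lau_multiplier_characterization {A U : Type*}
    [NonUnitalNormedRing A] [NormedSpace ℂ A] [IsScalarTower ℂ A A]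
    [SMulCommClass ℂ A A] [CompleteSpace A]
    [NonUnitalNormedRing U] [NormedSpace ℂ U] [IsScalarTower ℂ U U]
    [SMulCommClass ℂ U U] [CompleteSpace U]
    (θ : A →L[ℂ] ℂ) (hθmul : ∀ a b : A, θ (a * b) = θ a * θ b) (hθ0 : θ ≠ 0)
    (T : (A × U) →ₗ[ℂ] A × U) :
    (∀ p q : A × U,
      lauMul (fun a => θ a) p (T q) = lauMul (fun a => θ a) (T p) q) ↔
    ∃ (R₁ : A →ₗ[ℂ] A) (R₂ : A →ₗ[ℂ] U) (S₁ : U →ₗ[ℂ] A) (S₂ : U →ₗ[ℂ] U),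
      (∀ p : A × U, T p = (R₁ p.1 + S₁ p.2, R₂ p.1 + S₂ p.2)) ∧
      -- (i) R₁ is a multiplier on A
      (∀ a b : A, a * R₁ b = R₁ a * b) ∧
      -- (ii)
      (∀ (a : A) (u : U), a * S₁ u = 0 ∧ S₁ u * a = 0) ∧
      -- (iii)
      (∀ a a' : A, θ a • R₂ a' = θ a' • R₂ a) ∧
      -- (iv)
      (∀ (a : A) (u : U), θ a • S₂ u = θ (R₁ a) • u + R₂ a * u ∧
                          θ a • S₂ u = θ (R₁ a) • u + u * R₂ a) ∧
      -- (v)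
      (∀ u u' : U, θ (S₁ u) • u' + S₂ u * u' = θ (S₁ u') • u + u * S₂ u') := by

  constructor
  · intro h
    refine ⟨(LinearMap.fst ℂ A U).comp (T.comp (LinearMap.inl ℂ A U)),
      (LinearMap.snd ℂ A U).comp (T.comp (LinearMap.inl ℂ A U)),
      (LinearMap.fst ℂ A U).comp (T.comp (LinearMap.inr ℂ A U)),
      (LinearMap.snd ℂ A U).comp (T.comp (LinearMap.inr ℂ A U)), ?_, ?_, ?_, ?_, ?_, ?_⟩
    · intro p
      have hp : T p = T (p.1, 0) + T (0, p.2) := by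
        rw [← map_add]; congr 1; ext <;> simp
      simp only [LinearMap.comp_apply, LinearMap.inl_apply, LinearMap.inr_apply,
        LinearMap.fst_apply, LinearMap.snd_apply, hp]
      rfl
    · intro a b
      have := congrArg Prod.fst (h (a, 0) (b, 0))
      simpa [lauMul] using this
    · intro a u
      have h1 := congrArg Prod.fst (h (a, 0) (0, u))
      have h2 := congrArg Prod.fst (h (0, u) (a, 0))
      simp only [lauMul] at h1 h2
      simp only [LinearMap.comp_apply, LinearMap.inl_apply, LinearMap.inr_apply,
        LinearMap.fst_apply, LinearMap.snd_apply]
      constructor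
      · simpa using h1
      · simpa using h2.symm
    · intro a a'
      have := congrArg Prod.snd (h (a, 0) (a', 0))
      simpa [lauMul] using this
    · intro a u
      have h1 := congrArg Prod.snd (h (a, 0) (0, u))
      have h2 := congrArg Prod.snd (h (0, u) (a, 0))
      simp only [lauMul] at h1 h2
      simp only [LinearMap.comp_apply, LinearMap.inl_apply, LinearMap.inr_apply,
        LinearMap.fst_apply, LinearMap.snd_apply]
      constructor
      · simpa using h1
      · simpa using h2.symm
    · intro u u'
      have := congrArg Prod.snd (h (0, u) (0, u'))
      simp only [lauMul] at this
      simp only [LinearMap.comp_apply, LinearMap.inl_apply, LinearMap.inr_apply,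
        LinearMap.fst_apply, LinearMap.snd_apply]
      simpa using this.symm
  · rintro ⟨R₁, R₂, S₁, S₂, hT, h1, h2, h3, h4, h5⟩ p q
    rw [hT p, hT q]
    simp only [lauMul, Prod.mk.injEq]
    constructor
    · rw [mul_add, add_mul, (h2 p.1 q.2).1, (h2 q.1 p.2).2, h1, add_zero]
    · have e1 := h3 p.1 q.1
      have e2 := (h4 p.1 q.2).1
      have e3 := (h4 q.1 p.2).2
      have e4 := h5 p.2 q.2
      simp only [map_add, smul_add, add_smul, mul_add, add_mul]
      calc θ p.1 • R₂ q.1 + θ p.1 • S₂ q.2 + (θ (R₁ q.1) • p.2 + θ (S₁ q.2) • p.2) +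
            (p.2 * R₂ q.1 + p.2 * S₂ q.2)
          = θ p.1 • R₂ q.1 + θ p.1 • S₂ q.2 + (θ (R₁ q.1) • p.2 + p.2 * R₂ q.1) +
            (θ (S₁ q.2) • p.2 + p.2 * S₂ q.2) := by abel
        _ = θ q.1 • R₂ p.1 + (θ (R₁ p.1) • q.2 + R₂ p.1 * q.2) + θ q.1 • S₂ p.2 +
            (θ (S₁ p.2) • q.2 + S₂ p.2 * q.2) := by rw [e1, e2, ← e3, ← e4]
        _ = θ (R₁ p.1) • q.2 + θ (S₁ p.2) • q.2 + (θ q.1 • R₂ p.1 + θ q.1 • S₂ p.2) +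
            (R₂ p.1 * q.2 + S₂ p.2 * q.2) := by abel
end

section
/- Let T : A ×_θ U → A ×_θ U be a multiplier with components R₁, R₂, S₁, S₂ as in the multiplier characterization. Then R₂ : A → U and S₂ : U → U are automatically continuous, and the separating spaces of R₁ and S₁ are contained in ker θ. Consequently, if A is faithful (xA = Ax = {0} implies x = 0), then every multiplier on A ×_θ U is continuous. -/
open Filter Topology

/-- Let T be a multiplier on A ×_θ U with components
R₁(a) = (T(a,0))₁, R₂(a) = (T(a,0))₂, S₁(u) = (T(0,u))₁, S₂(u) = (T(0,u))₂.
Then R₂ and S₂ are automatically continuous, the separating spaces of R₁ and S₁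
are contained in ker θ, and if A is faithful then T is continuous. -/
theorem lau_multiplier_continuity {A U : Type*}
    [NonUnitalNormedRing A] [NormedSpace ℂ A] [IsScalarTower ℂ A A]
    [SMulCommClass ℂ A A] [CompleteSpace A]
    [NonUnitalNormedRing U] [NormedSpace ℂ U] [IsScalarTower ℂ U U]
    [SMulCommClass ℂ U U] [CompleteSpace U]
    (θ : A →L[ℂ] ℂ) (hθmul : ∀ a b : A, θ (a * b) = θ a * θ b) (hθ0 : θ ≠ 0)
    (T : (A × U) →ₗ[ℂ] A × U)
    (hT : ∀ p q : A × U,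
      lauMul (fun a => θ a) p (T q) = lauMul (fun a => θ a) (T p) q) :
    -- R₂ and S₂ are automatically continuous
    Continuous (fun a : A => (T (a, 0)).2) ∧
    Continuous (fun u : U => (T (0, u)).2) ∧
    -- the separating spaces of R₁ and S₁ are contained in ker θ
    (∀ x : A, (∃ a : ℕ → A, Tendsto a atTop (nhds 0) ∧
        Tendsto (fun n => (T (a n, 0)).1) atTop (nhds x)) → θ x = 0) ∧
    (∀ x : A, (∃ u : ℕ → U, Tendsto u atTop (nhds 0) ∧
        Tendsto (fun n => (T (0, u n)).1) atTop (nhds x)) → θ x = 0) ∧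
    -- if A is faithful, then every multiplier on A ×_θ U is continuous
    ((∀ a : A, (∀ b : A, a * b = 0 ∧ b * a = 0) → a = 0) → Continuous T) := by
  -- an element a₀ with θ a₀ = 1
  obtain ⟨b, hb⟩ : ∃ b : A, θ b ≠ 0 := by
    by_contra h
    push_neg at h
    exact hθ0 (by ext a; simpa using h a)
  set a₀ : A := (θ b)⁻¹ • b with ha₀def
  have hθa₀ : θ a₀ = 1 := by
    simp [ha₀def, map_smul, smul_eq_mul, inv_mul_cancel₀ hb]
  -- basic identities from the multiplier property
  have h1 : ∀ a a' : A, a * (T (a', 0)).1 = (T (a, 0)).1 * a' := by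
    intro a a'
    have h := hT (a, 0) (a', 0)
    rw [Prod.ext_iff] at h
    simpa [lauMul] using h.1
  have h2 : ∀ a a' : A, θ a • (T (a', 0)).2 = θ a' • (T (a, 0)).2 := by
    intro a a'
    have h := hT (a, 0) (a', 0)
    rw [Prod.ext_iff] at h
    simpa [lauMul] using h.2
  have h3 : ∀ (a : A) (u : U), a * (T ((0 : A), u)).1 = 0 := by
    intro a u
    have h := hT (a, 0) ((0 : A), u)
    rw [Prod.ext_iff] at h
    simpa [lauMul] using h.1
  have h4 : ∀ (a : A) (u : U),
      θ a • (T ((0 : A), u)).2 = θ ((T (a, 0)).1) • u + (T (a, 0)).2 * u := by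
    intro a u
    have h := hT (a, 0) ((0 : A), u)
    rw [Prod.ext_iff] at h
    simpa [lauMul] using h.2
  have h5 : ∀ (u : U) (a : A), (T ((0 : A), u)).1 * a = 0 := by
    intro u a
    have h := hT ((0 : A), u) (a, 0)
    rw [Prod.ext_iff] at h
    simpa [lauMul] using h.1.symm
  set v : U := (T (a₀, 0)).2 with hv
  set c : ℂ := θ ((T (a₀, 0)).1) with hc
  -- closed forms for R₂ and S₂
  have hR₂ : ∀ a : A, (T (a, 0)).2 = θ a • v := by
    intro a
    have := h2 a₀ a
    rwa [hθa₀, one_smul] at this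
  have hS₂ : ∀ u : U, (T ((0 : A), u)).2 = c • u + v * u := by
    intro u
    have := h4 a₀ u
    rwa [hθa₀, one_smul] at this
  have contR₂ : Continuous (fun a : A => (T (a, 0)).2) := by
    have : (fun a : A => (T (a, 0)).2) = fun a : A => θ a • v := funext hR₂
    rw [this]
    exact (θ.continuous).smul continuous_const
  have contS₂ : Continuous (fun u : U => (T ((0 : A), u)).2) := by
    have : (fun u : U => (T ((0 : A), u)).2) = fun u : U => c • u + v * u :=
      funext hS₂
    rw [this]
    exact ((continuous_const.smul continuous_id).add
      (continuous_const.mul continuous_id))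
  -- annihilation property of the separating space of R₁
  have hann : ∀ (x : A) (a : ℕ → A), Tendsto a atTop (nhds 0) →
      Tendsto (fun n => (T (a n, 0)).1) atTop (nhds x) →
      ∀ d : A, x * d = 0 ∧ d * x = 0 := by
    intro x a ha hTa d
    constructor
    · have t1 : Tendsto (fun n => (T (a n, 0)).1 * d) atTop (nhds (x * d)) :=
        ((continuous_mul_right d).tendsto x).comp hTa
      have t2 : Tendsto (fun n => (T (a n, 0)).1 * d) atTop (nhds 0) := by
        have : (fun n => (T (a n, 0)).1 * d) = fun n => a n * (T (d, 0)).1 := by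
          funext n; exact (h1 (a n) d).symm
        rw [this]
        simpa [Function.comp_def] using ((continuous_mul_right ((T (d, 0)).1)).tendsto 0).comp ha
      exact tendsto_nhds_unique t1 t2
    · have t1 : Tendsto (fun n => d * (T (a n, 0)).1) atTop (nhds (d * x)) :=
        ((continuous_mul_left d).tendsto x).comp hTa
      have t2 : Tendsto (fun n => d * (T (a n, 0)).1) atTop (nhds 0) := by
        have : (fun n => d * (T (a n, 0)).1) = fun n => (T (d, 0)).1 * a n := by
          funext n; exact h1 d (a n)
        rw [this]
        simpa [Function.comp_def] using ((continuous_mul_left ((T (d, 0)).1)).tendsto 0).comp ha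
      exact tendsto_nhds_unique t1 t2
  refine ⟨contR₂, contS₂, ?_, ?_, ?_⟩
  · -- separating space of R₁ ⊆ ker θ
    rintro x ⟨a, ha, hTa⟩
    have hx : x * a₀ = 0 := (hann x a ha hTa a₀).1
    have : θ x * θ a₀ = 0 := by rw [← hθmul, hx, map_zero]
    rwa [hθa₀, mul_one] at this
  · -- separating space of S₁ ⊆ ker θ
    rintro x ⟨u, _, hTu⟩
    have hz : ∀ n, θ ((T ((0 : A), u n)).1) = 0 := by
      intro n
      have h := h5 (u n) a₀
      have : θ ((T ((0 : A), u n)).1) * θ a₀ = 0 := by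
        rw [← hθmul, h, map_zero]
      rwa [hθa₀, mul_one] at this
    have t1 : Tendsto (fun n => θ ((T ((0 : A), u n)).1)) atTop (nhds (θ x)) :=
      (θ.continuous.tendsto x).comp hTu
    have t2 : Tendsto (fun n => θ ((T ((0 : A), u n)).1)) atTop (nhds 0) := by
      simpa [funext hz] using (tendsto_const_nhds : Tendsto (fun _ : ℕ => (0:ℂ)) atTop (nhds 0))
    exact tendsto_nhds_unique t1 t2
  · -- faithful case
    intro hA
    -- S₁ = 0
    have hS₁ : ∀ u : U, (T ((0 : A), u)).1 = 0 := by
      intro u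
      exact hA _ (fun d => ⟨h5 u d, h3 d u⟩)
    -- R₁ as a linear map
    let R₁ : A →ₗ[ℂ] A :=
      { toFun := fun a => (T (a, 0)).1
        map_add' := by
          intro x y
          show (T ((x + y : A), (0:U))).1 = (T (x, (0:U))).1 + (T (y, (0:U))).1
          have h : ((x + y : A), (0 : U)) = (x, (0:U)) + (y, (0:U)) := by
            simp [Prod.ext_iff]
          rw [h, map_add]; rfl
        map_smul' := by
          intro m x
          show (T ((m • x : A), (0:U))).1 = m • (T (x, (0:U))).1
          have h : ((m • x : A), (0 : U)) = m • (x, (0:U)) := by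
            simp [Prod.ext_iff]
          rw [h, map_smul]; rfl }
    have contR₁ : Continuous R₁ := by
      apply R₁.continuous_of_seq_closed_graph
      intro s x y hs hRs
      have ha : Tendsto (fun n => s n - x) atTop (nhds 0) := by
        simpa using hs.sub (tendsto_const_nhds (x := x))
      have hTa : Tendsto (fun n => (T ((s n - x : A), (0:U))).1) atTop
          (nhds (y - R₁ x)) := by
        have : (fun n => (T ((s n - x : A), (0:U))).1)
            = fun n => R₁ (s n) - R₁ x := by
          funext n
          exact show R₁ (s n - x) = R₁ (s n) - R₁ x from map_sub R₁ (s n) x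
        rw [this]
        exact hRs.sub (tendsto_const_nhds (x := R₁ x))
      have hy : y - R₁ x = 0 :=
        hA _ (fun d => ⟨(hann _ _ ha hTa d).1, (hann _ _ ha hTa d).2⟩)
      exact sub_eq_zero.mp hy
    have hTform : ∀ p : A × U,
        T p = ((T (p.1, (0:U))).1, θ p.1 • v + (c • p.2 + v * p.2)) := by
      intro p
      have hp : T p = T (p.1, (0:U)) + T ((0:A), p.2) := by
        rw [← map_add]; congr 1; simp [Prod.ext_iff]
      rw [hp]
      ext
      · simp [hS₁ p.2]
      · simp [hR₂ p.1, hS₂ p.2]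
    rw [show (⇑T) = fun p : A × U =>
        (((T (p.1, (0:U))).1 : A), θ p.1 • v + (c • p.2 + v * p.2)) from funext hTform]
    exact (contR₁.comp continuous_fst).prodMk
      (((θ.continuous.comp continuous_fst).smul continuous_const).add
        ((continuous_const.smul continuous_snd).add
          (continuous_const.mul continuous_snd)))
end
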